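/- arXiv:1108.5964 — 4 statements merged into one kernel-verified Lean document; each statement's English description precedes it below -/
import Mathlib

section
/- Let t ≥ 2 be an integer and let q be a complex number with |q| < 1/2. Then the power series Σ_{n≥0} c_n q^n converges absolutely, the series defining N(q) and D(q) converge absolutely, and (Σ_{n≥0} c_n q^n) · D(q) = N(q). -/
noncomputable section

/-- `[k] = 1 + t + t^2 + ⋯ + t^(k-1)`. -/
def brk (t k : ℕ) : ℕ := ∑ i ∈ Finset.range k, t ^ i

/-- `f_j(q) = q^[j] / (1 - q^[j])`. -/
def ff (t : ℕ) (q : ℂ) (j : ℕ) : ℂ := q ^ brk t j / (1 - q ^ brk t j)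

/-- `N(q) = Σ_{k≥0} (-1)^k q^[k] Π_{j=1}^k f_j(q)`. -/
def Nfun (t : ℕ) (q : ℂ) : ℂ :=
  ∑' k : ℕ, (-1 : ℂ) ^ k * q ^ brk t k * ∏ j ∈ Finset.Icc 1 k, ff t q j

/-- `D(q) = Σ_{k≥0} (-1)^k Π_{j=1}^k f_j(q)`. -/
def Dfun (t : ℕ) (q : ℂ) : ℂ :=
  ∑' k : ℕ, (-1 : ℂ) ^ k * ∏ j ∈ Finset.Icc 1 k, ff t q j

/-- A "bounded degree sequence": positive integers, first entry 1,
`b_{i+1} ≤ t b_i`. -/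
def IsBSeq (t : ℕ) (l : List ℕ) : Prop :=
  (∀ x ∈ l, 0 < x) ∧ (l ≠ [] → l.headI = 1) ∧
  ∀ i (h : i + 1 < l.length), l.get ⟨i + 1, h⟩ ≤ t * l.get ⟨i, Nat.lt_of_succ_lt h⟩

/-- `c_n`: the number of bounded degree sequences with sum `n`. -/
def cseq (t n : ℕ) : ℕ := {l : List ℕ | IsBSeq t l ∧ l.sum = n}.ncard

/-!
Let `Φ(u) = Σ_s q^(b_1 + ⋯ + b_l) u^(t b_l)` be the generating function of the sequences by their
sum and by the bound `t b_l` on a next entry (`1` for the empty sequence), so that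
`Φ(1) = Σ c_n q^n`. Removing the last entry gives the functional equation
`Φ(u) = u + f(v) (Φ(1) - Φ(v))` with `v = q u^t` and `f(v) = v / (1 - v)`. Along `u = q^[k]` one has
`v = q^[k+1]`, hence `f(v) = f_{k+1}(q)`, and iterating the equation shows that the partial sums
satisfy `Φ(1) D_K - N_K = (-1)^(K+1) f_1 ⋯ f_K (Φ(1) - Φ(q^[K]))`. The right-hand side tends to `0`
because `|f_j(q)| ≤ 2|q| < 1` and `Φ` is bounded on the closed unit disc.
-/

open Finset Filter Topology

lemma brk_succ (t k : ℕ) : brk t (k + 1) = 1 + t * brk t k := by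
  rw [brk, brk, sum_range_succ', mul_sum, add_comm]
  simp [pow_succ, mul_comm]

lemma brk_ne_zero (t : ℕ) {k : ℕ} (hk : k ≠ 0) : brk t k ≠ 0 := by
  obtain ⟨j, rfl⟩ := Nat.exists_eq_succ_of_ne_zero hk
  rw [brk_succ]
  omega

lemma Summable.tsum_option {α E : Type*} [AddCommGroup E] [TopologicalSpace E]
    [IsTopologicalAddGroup E] [T2Space E] {f : Option α → E} (hf : Summable f) :
    ∑' o, f o = f none + ∑' a, f (some a) := by
  classical
  rw [hf.tsum_eq_add_tsum_ite none]
  congr 1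
  exact ((Option.some_injective α).tsum_eq (by
    rintro (_ | a) h
    · simp at h
    · exact ⟨a, rfl⟩)).symm.trans (tsum_congr fun a => by simp)

lemma geom_sum_fin_succ_eq {K : Type*} [Field K] {v : K} (hv : v ≠ 1) (c : ℕ) :
    ∑ b : Fin c, v ^ ((b : ℕ) + 1) = v / (1 - v) * (1 - v ^ c) := by
  have h1v : 1 - v ≠ 0 := sub_ne_zero.2 hv.symm
  have hv1 : v - 1 ≠ 0 := sub_ne_zero.2 hv
  rw [Fin.sum_univ_eq_sum_range (fun i => v ^ (i + 1)) c]
  simp_rw [pow_succ]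
  rw [← sum_mul, geom_sum_eq hv]
  field_simp
  ring

lemma norm_div_one_sub_le {𝕜 : Type*} [NormedField 𝕜] {w : 𝕜} (hw : ‖w‖ ≤ 1 / 2) :
    ‖w / (1 - w)‖ ≤ 2 * ‖w‖ := by
  have h : 1 / 2 ≤ ‖1 - w‖ := by
    have := norm_sub_norm_le (1 : 𝕜) w
    rw [norm_one] at this
    linarith
  rw [norm_div, div_le_iff₀ (by linarith)]
  nlinarith [norm_nonneg w]

def nextBound (t : ℕ) (l : List ℕ) : ℕ := (l.getLast?.map (t * ·)).getD 1

lemma nextBound_append_singleton (t : ℕ) (l : List ℕ) (b : ℕ) :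
    nextBound t (l ++ [b]) = t * b := by
  simp [nextBound]

lemma isBSeq_iff_isChain (t : ℕ) (l : List ℕ) :
    IsBSeq t l ↔ (∀ x ∈ l, 0 < x) ∧ (l ≠ [] → l.headI = 1) ∧
      l.IsChain (fun a b => b ≤ t * a) := by
  rw [IsBSeq, List.isChain_iff_getElem]
  constructor <;> rintro ⟨h1, h2, h3⟩ <;> exact ⟨h1, h2, fun i h => h3 i (by omega)⟩

lemma isBSeq_nil (t : ℕ) : IsBSeq t [] := by
  simp [isBSeq_iff_isChain]

lemma isBSeq_append_singleton_iff (t : ℕ) (l : List ℕ) (b : ℕ) :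
    IsBSeq t (l ++ [b]) ↔ IsBSeq t l ∧ 0 < b ∧ b ≤ nextBound t l := by
  rcases l.eq_nil_or_concat' with rfl | ⟨l, a, rfl⟩
  · simp [isBSeq_iff_isChain, nextBound]
    omega
  · have hhead : (l ++ [a, b]).headI = (l ++ [a]).headI := by cases l <;> rfl
    simp [isBSeq_iff_isChain, List.isChain_append, nextBound, hhead, or_imp, forall_and]
    tauto

abbrev BSeq (t : ℕ) : Type := {l : List ℕ // IsBSeq t l}

def appendLast (t : ℕ) : Option (Σ s : BSeq t, Fin (nextBound t s.1)) → BSeq t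
  | none => ⟨[], isBSeq_nil t⟩
  | some ⟨s, b⟩ => ⟨s.1 ++ [(b : ℕ) + 1],
      (isBSeq_append_singleton_iff t _ _).2 ⟨s.2, b.1.succ_pos, b.2⟩⟩

lemma appendLast_bijective (t : ℕ) : Function.Bijective (appendLast t) := by
  constructor
  · rintro (_ | ⟨⟨l, hl⟩, b⟩) (_ | ⟨⟨l', hl'⟩, b'⟩) h <;>
      simp only [appendLast, Subtype.mk.injEq] at h
    · rfl
    · simp at h
    · simp at h
    · obtain ⟨rfl, hb⟩ := List.append_inj' h rfl
      obtain rfl : b = b' := Fin.ext (by simpa using hb)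
      rfl
  · rintro ⟨l, hl⟩
    rcases l.eq_nil_or_concat' with rfl | ⟨l, a, rfl⟩
    · exact ⟨none, rfl⟩
    · obtain ⟨hl, ha, hab⟩ := (isBSeq_append_singleton_iff t l a).1 hl
      refine ⟨some ⟨⟨l, hl⟩, ⟨a - 1, show a - 1 < nextBound t l by omega⟩⟩, ?_⟩
      simp only [appendLast, Subtype.mk.injEq]
      congr
      omega

lemma tsum_bseq_eq_nil_add {E : Type*} [NormedAddCommGroup E] [CompleteSpace E] {t : ℕ}
    {f : BSeq t → E} (hf : Summable f) :
    ∑' s, f s = f ⟨[], isBSeq_nil t⟩ +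
      ∑' s : BSeq t, ∑ b : Fin (nextBound t s.1), f (appendLast t (some ⟨s, b⟩)) := by
  let e := Equiv.ofBijective _ (appendLast_bijective t)
  have hf' : Summable fun o => f (e o) := e.summable_iff.2 hf
  have hsome : Summable fun p => f (e (some p)) := hf'.comp_injective (Option.some_injective _)
  rw [← e.tsum_eq, hf'.tsum_option, hsome.tsum_sigma]
  simp_rw [tsum_fintype]
  rfl

section Counting

variable {t : ℕ}

def sumFiberToComposition (n : ℕ) :
    (fun s : BSeq t => s.1.sum) ⁻¹' {n} → Composition n :=
  fun s => ⟨s.1.1, fun h => s.1.2.1 _ h, s.2⟩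

lemma sumFiberToComposition_injective (n : ℕ) :
    Function.Injective (sumFiberToComposition (t := t) n) :=
  fun _ _ h => Subtype.ext (Subtype.ext (congrArg Composition.blocks h))

instance (n : ℕ) : Finite ((fun s : BSeq t => s.1.sum) ⁻¹' {n}) :=
  Finite.of_injective _ (sumFiberToComposition_injective n)

lemma card_sum_fiber (n : ℕ) :
    Nat.card ((fun s : BSeq t => s.1.sum) ⁻¹' {n}) = cseq t n := by
  rw [cseq, ← Nat.card_coe_set_eq]
  exact Nat.card_congr (Equiv.subtypeSubtypeEquivSubtypeInter (IsBSeq t) (fun l => l.sum = n))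

lemma cseq_le_two_pow (n : ℕ) : cseq t n ≤ 2 ^ n := by
  calc cseq t n = Nat.card ((fun s : BSeq t => s.1.sum) ⁻¹' {n}) := (card_sum_fiber n).symm
    _ ≤ Nat.card (Composition n) :=
      Nat.card_le_card_of_injective _ (sumFiberToComposition_injective n)
    _ = 2 ^ (n - 1) := by rw [Nat.card_eq_fintype_card, composition_card]
    _ ≤ 2 ^ n := Nat.pow_le_pow_right two_pos (n.sub_le 1)

lemma tsum_sum_fiber {E : Type*} [AddCommGroup E] [TopologicalSpace E]
    [IsTopologicalAddGroup E] [T2Space E]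
    (g : ℕ → E) (n : ℕ) :
    ∑' s : (fun s : BSeq t => s.1.sum) ⁻¹' {n}, g s.1.1.sum = cseq t n • g n := by
  rw [tsum_congr fun s : (fun s : BSeq t => s.1.sum) ⁻¹' {n} => congrArg g s.2, tsum_const,
    card_sum_fiber]

lemma hasSum_cseq_smul {E : Type*} [NormedAddCommGroup E] [CompleteSpace E] {g : ℕ → E}
    (hg : Summable fun s : BSeq t => g s.1.sum) :
    HasSum (fun n => cseq t n • g n) (∑' s : BSeq t, g s.1.sum) := by
  simpa only [tsum_sum_fiber] using hg.hasSum.tsum_fiberwise (fun s : BSeq t => s.1.sum)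

lemma summable_pow_sum {r : ℝ} (h0 : 0 ≤ r) (hr : r < 1 / 2) :
    Summable fun s : BSeq t => r ^ s.1.sum := by
  refine (summable_partition (fun s => by positivity)
    (s := fun n => (fun s : BSeq t => s.1.sum) ⁻¹' {n}) fun s => ⟨_, rfl, fun _ h => h.symm⟩).2
    ⟨fun n => .of_finite, ?_⟩
  refine (summable_geometric_of_lt_one (r := 2 * r) (by positivity) (by linarith)).of_nonneg_of_le
    (fun n => tsum_nonneg fun _ => by positivity) fun n => ?_
  rw [tsum_sum_fiber (fun n => r ^ n), nsmul_eq_mul, mul_pow]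
  gcongr
  exact_mod_cast cseq_le_two_pow n

end Counting

def bseqGF (t : ℕ) (q u : ℂ) : ℂ := ∑' s : BSeq t, q ^ s.1.sum * u ^ nextBound t s.1

section GeneratingFunction

variable {t : ℕ} {q u : ℂ}

lemma norm_bseqGF_term_le (hu : ‖u‖ ≤ 1) (s : BSeq t) :
    ‖q ^ s.1.sum * u ^ nextBound t s.1‖ ≤ ‖q‖ ^ s.1.sum := by
  rw [norm_mul, norm_pow, norm_pow]
  exact mul_le_of_le_one_right (by positivity) (pow_le_one₀ (norm_nonneg u) hu)

lemma summable_bseqGF (hq : ‖q‖ < 1 / 2) (hu : ‖u‖ ≤ 1) :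
    Summable fun s : BSeq t => q ^ s.1.sum * u ^ nextBound t s.1 :=
  .of_norm_bounded (summable_pow_sum (norm_nonneg q) hq) (norm_bseqGF_term_le hu)

lemma norm_bseqGF_le (hq : ‖q‖ < 1 / 2) (hu : ‖u‖ ≤ 1) :
    ‖bseqGF t q u‖ ≤ ∑' s : BSeq t, ‖q‖ ^ s.1.sum :=
  tsum_of_norm_bounded (summable_pow_sum (norm_nonneg q) hq).hasSum (norm_bseqGF_term_le hu)

lemma hasSum_bseqGF_one (hq : ‖q‖ < 1 / 2) :
    HasSum (fun n => (cseq t n : ℂ) * q ^ n) (bseqGF t q 1) := by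
  simpa [bseqGF, nsmul_eq_mul] using
    hasSum_cseq_smul (summable_bseqGF (t := t) hq norm_one.le |>.congr fun s => by simp)

lemma bseqGF_eq (hq : ‖q‖ < 1 / 2) (hu : ‖u‖ ≤ 1) :
    bseqGF t q u = u + q * u ^ t / (1 - q * u ^ t) *
      (bseqGF t q 1 - bseqGF t q (q * u ^ t)) := by
  set v := q * u ^ t
  have hv : ‖v‖ < 1 := by
    calc ‖v‖ ≤ ‖q‖ := by
          rw [norm_mul, norm_pow]
          exact mul_le_of_le_one_right (norm_nonneg q) (pow_le_one₀ (norm_nonneg u) hu)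
      _ < 1 := by linarith
  have hv1 : v ≠ 1 := fun h => by simp [h] at hv
  have hinner : ∀ s : BSeq t, ∑ b : Fin (nextBound t s.1),
      q ^ (appendLast t (some ⟨s, b⟩)).1.sum * u ^ nextBound t (appendLast t (some ⟨s, b⟩)).1 =
      v / (1 - v) * (q ^ s.1.sum * 1 ^ nextBound t s.1 - q ^ s.1.sum * v ^ nextBound t s.1) := by
    intro s
    simp only [appendLast, List.sum_append, List.sum_singleton, nextBound_append_singleton]
    calc ∑ b : Fin (nextBound t s.1), q ^ (s.1.sum + (b + 1)) * u ^ (t * (b + 1))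
        = q ^ s.1.sum * ∑ b : Fin (nextBound t s.1), v ^ ((b : ℕ) + 1) := by
          rw [mul_sum]
          refine sum_congr rfl fun b _ => ?_
          rw [mul_pow, ← pow_mul, pow_add]
          ring
      _ = _ := by
          rw [geom_sum_fin_succ_eq hv1]
          ring
  rw [bseqGF, tsum_bseq_eq_nil_add (summable_bseqGF hq hu), tsum_congr hinner, tsum_mul_left,
    (summable_bseqGF hq norm_one.le).tsum_sub (summable_bseqGF hq hv.le)]
  simp [nextBound, bseqGF]

end GeneratingFunction

section Telescoping

variable {t : ℕ} {q : ℂ}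

lemma norm_ff_le (hq : ‖q‖ ≤ 1 / 2) {k : ℕ} (hk : k ≠ 0) : ‖ff t q k‖ ≤ 2 * ‖q‖ := by
  have h : ‖q ^ brk t k‖ ≤ ‖q‖ := by
    rw [norm_pow]
    exact pow_le_of_le_one (norm_nonneg q) (by linarith) (brk_ne_zero t hk)
  exact (norm_div_one_sub_le (h.trans hq)).trans (by linarith)

lemma norm_prod_ff_le (hq : ‖q‖ ≤ 1 / 2) (k : ℕ) :
    ‖∏ j ∈ Icc 1 k, ff t q j‖ ≤ (2 * ‖q‖) ^ k := by
  rw [norm_prod]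
  calc ∏ j ∈ Icc 1 k, ‖ff t q j‖ ≤ ∏ _j ∈ Icc 1 k, 2 * ‖q‖ :=
        prod_le_prod (fun _ _ => norm_nonneg _)
          fun j hj => norm_ff_le hq (by have := (mem_Icc.1 hj).1; omega)
    _ = (2 * ‖q‖) ^ k := by simp

lemma bseqGF_telescope (hq : ‖q‖ < 1 / 2) (K : ℕ) :
    bseqGF t q 1 * ∑ k ∈ range K, (-1) ^ k * ∏ j ∈ Icc 1 k, ff t q j -
        ∑ k ∈ range K, (-1) ^ k * q ^ brk t k * ∏ j ∈ Icc 1 k, ff t q j =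
      (-1) ^ (K + 1) * (∏ j ∈ Icc 1 K, ff t q j) * (bseqGF t q 1 - bseqGF t q (q ^ brk t K)) := by
  induction K with
  | zero => simp [brk]
  | succ K ih =>
    have hstep : bseqGF t q (q ^ brk t K) = q ^ brk t K +
        ff t q (K + 1) * (bseqGF t q 1 - bseqGF t q (q ^ brk t (K + 1))) := by
      have hv : q * (q ^ brk t K) ^ t = q ^ brk t (K + 1) := by
        rw [← pow_mul, ← pow_succ', brk_succ, add_comm, mul_comm]
      rw [bseqGF_eq hq (by simpa using pow_le_one₀ (norm_nonneg q) (by linarith)), hv, ff]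
    rw [sum_range_succ, sum_range_succ, prod_Icc_succ_top (Nat.le_add_left 1 K)]
    linear_combination ih + (-1) ^ K * (∏ j ∈ Icc 1 K, ff t q j) * hstep

lemma tendsto_bseqGF_telescope (hq : ‖q‖ < 1 / 2) :
    Tendsto (fun K => (-1) ^ (K + 1) * (∏ j ∈ Icc 1 K, ff t q j) *
      (bseqGF t q 1 - bseqGF t q (q ^ brk t K))) atTop (𝓝 0) := by
  set C := ∑' s : BSeq t, ‖q‖ ^ s.1.sum
  have hC : ∀ K, ‖bseqGF t q 1 - bseqGF t q (q ^ brk t K)‖ ≤ 2 * C := fun K => by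
    refine (norm_sub_le _ _).trans ?_
    rw [two_mul]
    exact add_le_add (norm_bseqGF_le hq norm_one.le)
      (norm_bseqGF_le hq (by simpa using pow_le_one₀ (norm_nonneg q) (by linarith)))
  refine squeeze_zero_norm (a := fun K => (2 * ‖q‖) ^ K * (2 * C)) (fun K => ?_) ?_
  · rw [norm_mul, norm_mul, norm_pow, norm_neg, norm_one, one_pow, one_mul]
    exact mul_le_mul (norm_prod_ff_le hq.le K) (hC K) (norm_nonneg _) (by positivity)
  · simpa using (tendsto_pow_atTop_nhds_zero_of_lt_one (by positivity)
      (by linarith : 2 * ‖q‖ < 1)).mul_const (2 * C)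

end Telescoping

theorem stmt_0_general (t : ℕ) (q : ℂ) (hq : ‖q‖ < 1 / 2) :
    Summable (fun n : ℕ => ‖(cseq t n : ℂ) * q ^ n‖) ∧
    Summable (fun k : ℕ =>
      ‖(-1 : ℂ) ^ k * q ^ brk t k * ∏ j ∈ Finset.Icc 1 k, ff t q j‖) ∧
    Summable (fun k : ℕ => ‖(-1 : ℂ) ^ k * ∏ j ∈ Finset.Icc 1 k, ff t q j‖) ∧
    (∑' n : ℕ, (cseq t n : ℂ) * q ^ n) * Dfun t q = Nfun t q := by
  have hgeom : Summable fun k : ℕ => (2 * ‖q‖) ^ k :=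
    summable_geometric_of_lt_one (by positivity) (by linarith)
  have hN : Summable fun k : ℕ => ‖(-1 : ℂ) ^ k * q ^ brk t k * ∏ j ∈ Icc 1 k, ff t q j‖ :=
    hgeom.of_nonneg_of_le (fun _ => norm_nonneg _) fun k => by
      rw [norm_mul, norm_mul, norm_pow, norm_pow, norm_neg, norm_one, one_pow, one_mul]
      exact mul_le_of_le_one_left (norm_nonneg _) (pow_le_one₀ (norm_nonneg q) (by linarith))
        |>.trans (norm_prod_ff_le hq.le k)
  have hD : Summable fun k : ℕ => ‖(-1 : ℂ) ^ k * ∏ j ∈ Icc 1 k, ff t q j‖ :=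
    hgeom.of_nonneg_of_le (fun _ => norm_nonneg _) fun k => by
      simpa using norm_prod_ff_le hq.le k
  refine ⟨hgeom.of_nonneg_of_le (fun _ => norm_nonneg _) fun n => ?_, hN, hD, ?_⟩
  · rw [norm_mul, norm_pow, Complex.norm_natCast, mul_pow]
    gcongr
    exact_mod_cast cseq_le_two_pow n
  · have hlim := ((hD.of_norm.hasSum.tendsto_sum_nat).const_mul (bseqGF t q 1)).sub
      hN.of_norm.hasSum.tendsto_sum_nat
    rw [(hasSum_bseqGF_one hq).tsum_eq, ← sub_eq_zero]
    exact tendsto_nhds_unique (hlim.congr (bseqGF_telescope hq)) (tendsto_bseqGF_telescope hq)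

theorem stmt_0 (t : ℕ) (ht : 2 ≤ t) (q : ℂ) (hq : ‖q‖ < 1 / 2) :
    Summable (fun n : ℕ => ‖(cseq t n : ℂ) * q ^ n‖) ∧
    Summable (fun k : ℕ =>
      ‖(-1 : ℂ) ^ k * q ^ brk t k * ∏ j ∈ Finset.Icc 1 k, ff t q j‖) ∧
    Summable (fun k : ℕ => ‖(-1 : ℂ) ^ k * ∏ j ∈ Finset.Icc 1 k, ff t q j‖) ∧
    (∑' n : ℕ, (cseq t n : ℂ) * q ^ n) * Dfun t q = Nfun t q :=
  stmt_0_general t q hq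
end
end

section
/- Let t ≥ 30 be an integer and let q be a complex number with 1/2 ≤ |q| ≤ 1/r₃, where r₃ := 1 + (log 2)/t − (log 2 − log² 2)/(2t²). Then |D′(q) − D₄′(q)| ≤ 2^{−t²}, where D′ and D₄′ denote the complex derivatives of D and of the partial sum D₄. -/
noncomputable section

/-- Partial sum `D_4(q)`. -/
def D4 (t : ℕ) (q : ℂ) : ℂ :=
  ∑ k ∈ Finset.range 4, (-1 : ℂ) ^ k * ∏ j ∈ Finset.Icc 1 k, ff t q j

/-- `r₃ = 1 + log 2 / t - (log 2 - log² 2)/(2t²)`. -/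
def r3 (t : ℕ) : ℝ :=
  1 + Real.log 2 / t - (Real.log 2 - (Real.log 2) ^ 2) / (2 * t ^ 2)

/-!
Write `R = exp (-β)` with `β = beta t`. For `‖w‖ ≤ R` the factors obey
`‖f_j(w)‖ ≤ 1 / (exp ([j] β) - 1)`, which is at most `1 / 2` once `j ≥ 3`, so every term of the
tail `D - D₄` is dominated by a geometric sequence starting from a bound `M` for
`‖f₁ f₂ f₃ f₄‖`, of size `t · exp (-([3] + [4]) β)`. Because `exp β` stays below `r3 t` by a
margin of order `1 / t²`, the closed disc of radius `2⁻ᵗ` about `q` lies inside `‖w‖ < R`, and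
Cauchy's estimate on that disc bounds `‖D'(q) - D₄'(q)‖` by `2M · 2ᵗ`. Finally
`([3] + [4]) β ≥ (t² + t) log 2 + 0.19 t`, and `2M · 2ᵗ ≤ 2^(-t²)` follows.
-/

open Finset Metric Real Topology

theorem norm_prod_Icc_add_le {𝕜 : Type*} [NormedField 𝕜] (x : ℕ → 𝕜) {n : ℕ} {c : ℝ}
    (hc : 0 ≤ c) (hx : ∀ j, n < j → ‖x j‖ ≤ c) (i : ℕ) :
    ‖∏ j ∈ Icc 1 (i + n), x j‖ ≤ ‖∏ j ∈ Icc 1 n, x j‖ * c ^ i := by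
  induction i with
  | zero => simp
  | succ i ih =>
    rw [add_right_comm, prod_Icc_succ_top (by omega), norm_mul, pow_succ, ← mul_assoc]
    exact mul_le_mul ih (hx _ (by omega)) (norm_nonneg _) (by positivity)

theorem norm_deriv_tsum_sub_deriv_sum_le {U : Set ℂ} (hU : IsOpen U) {P : ℕ → ℂ → ℂ}
    (hP : ∀ k, DifferentiableOn ℂ (P k) U) {n : ℕ} {u : ℕ → ℝ} (hu : Summable u)
    (hPu : ∀ i, ∀ w ∈ U, ‖P (i + n) w‖ ≤ u i) {q : ℂ} {r : ℝ} (hr : 0 < r)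
    (hqr : closedBall q r ⊆ U) :
    ‖deriv (fun w => ∑' k, P k w) q - deriv (fun w => ∑ k ∈ range n, P k w) q‖ ≤
      (∑' i, u i) / r := by
  set head : ℂ → ℂ := fun w => ∑ k ∈ range n, P k w
  set tail : ℂ → ℂ := fun w => ∑' i, P (i + n) w
  have hhead : DifferentiableOn ℂ head U := DifferentiableOn.fun_sum fun k _ => hP k
  have htail : DifferentiableOn ℂ tail U :=
    Complex.differentiableOn_tsum_of_summable_norm hu (fun i => hP (i + n)) hU hPu
  have hqU : U ∈ 𝓝 q := hU.mem_nhds (hqr (mem_closedBall_self hr.le))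
  have hsplit : (fun w => ∑' k, P k w) =ᶠ[𝓝 q] head + tail := by
    filter_upwards [hqU] with w hw
    have hsum : Summable fun i => P (i + n) w := .of_norm_bounded hu fun i => hPu i w hw
    exact (((summable_nat_add_iff n).1 hsum).sum_add_tsum_nat_add n).symm
  rw [hsplit.deriv_eq, deriv_add (hhead.differentiableAt hqU) (htail.differentiableAt hqU),
    add_sub_cancel_left]
  refine Complex.norm_deriv_le_of_forall_mem_sphere_norm_le hr (htail.diffContOnCl_ball hqr)
    fun z hz => tsum_of_norm_bounded hu.hasSum fun i => hPu i z ?_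
  exact hqr (sphere_subset_closedBall hz)

theorem norm_div_one_sub_le_s3 {𝕜 : Type*} [NormedDivisionRing 𝕜] {z : 𝕜} {x : ℝ} (hz : ‖z‖ ≤ x) (hx : x < 1) :
    ‖z / (1 - z)‖ ≤ x / (1 - x) := by
  have h1 : 1 - x ≤ ‖1 - z‖ := by
    have := norm_sub_norm_le (1 : 𝕜) z
    rw [norm_one] at this
    linarith
  rw [norm_div]
  exact div_le_div₀ ((norm_nonneg z).trans hz) hz (by linarith) h1

theorem one_le_brk (t : ℕ) {j : ℕ} (hj : 1 ≤ j) : 1 ≤ brk t j := by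
  simpa [brk] using sum_le_sum_of_subset (f := (t ^ ·)) (range_subset_range.2 hj)

theorem brk_mono (t : ℕ) : Monotone (brk t) := fun _ _ h =>
  sum_le_sum_of_subset (range_subset_range.2 h)

theorem brk_two (t : ℕ) : brk t 2 = 1 + t := by simp [brk, sum_range_succ]

theorem brk_three (t : ℕ) : brk t 3 = 1 + t + t ^ 2 := by simp [brk, sum_range_succ]

theorem brk_four (t : ℕ) : brk t 4 = 1 + t + t ^ 2 + t ^ 3 := by simp [brk, sum_range_succ]

theorem norm_ff_le_s3 (t : ℕ) {j : ℕ} (hj : 1 ≤ j) {y : ℝ} (hy : 0 < y) {w : ℂ}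
    (hw : ‖w‖ ≤ exp (-y)) : ‖ff t w j‖ ≤ 1 / (exp (brk t j * y) - 1) := by
  have hpos : (0 : ℝ) < brk t j * y := mul_pos (by exact_mod_cast one_le_brk t hj) hy
  have hpow : ‖w ^ brk t j‖ ≤ exp (-(brk t j * y)) := by
    rw [norm_pow, neg_mul_eq_mul_neg, exp_nat_mul]
    exact pow_le_pow_left₀ (norm_nonneg w) hw _
  have hexp : 1 < exp (brk t j * y) := one_lt_exp_iff.2 hpos
  refine (norm_div_one_sub_le_s3 hpow (exp_lt_one_iff.2 (by linarith))).trans_eq ?_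
  rw [exp_neg]
  field_simp

theorem differentiableOn_ff (t : ℕ) {j : ℕ} (hj : 1 ≤ j) :
    DifferentiableOn ℂ (fun w => ff t w j) (ball 0 1) := by
  intro w hw
  have hw1 : ‖w‖ < 1 := by simpa using hw
  have hne : 1 - w ^ brk t j ≠ 0 := by
    refine sub_ne_zero.2 fun h => ?_
    have hlt : ‖w‖ ^ brk t j < 1 :=
      pow_lt_one₀ (norm_nonneg w) hw1 (Nat.one_le_iff_ne_zero.1 (one_le_brk t hj))
    rw [← norm_pow, ← h, norm_one] at hlt
    exact hlt.false
  have hpow : DifferentiableAt ℂ (fun z : ℂ => z ^ brk t j) w := differentiableAt_pow _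
  exact (hpow.div ((differentiableAt_const 1).sub hpow) hne).differentiableWithinAt

theorem exp_five_gt : 148 < exp 5 := by
  rw [show (5 : ℝ) = (5 : ℕ) * 1 by norm_num, exp_nat_mul]
  calc (148 : ℝ) < 2.7182818283 ^ 5 := by norm_num
    _ < exp 1 ^ 5 := pow_lt_pow_left₀ exp_one_gt_d9 (by norm_num) (by norm_num)

theorem mul_le_exp_mul {T : ℝ} (hT : 30 ≤ T) : 3.4 * T ≤ exp (0.19 * T) := by
  have h := add_one_le_exp (0.19 * T - 5)
  rw [show 0.19 * T = 5 + (0.19 * T - 5) by ring, exp_add]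
  nlinarith [exp_five_gt]

theorem one_div_exp_sub_one_nonneg {y : ℝ} (hy : 0 ≤ y) : 0 ≤ 1 / (exp y - 1) :=
  one_div_nonneg.2 (sub_nonneg.2 (one_le_exp hy))

theorem one_div_exp_sub_one_le_one_div {y : ℝ} (hy : 0 < y) : 1 / (exp y - 1) ≤ 1 / y :=
  one_div_le_one_div_of_le hy (by linarith [add_one_le_exp y])

theorem one_div_exp_sub_one_le_mul_exp_neg {y : ℝ} (hy : 5 ≤ y) :
    1 / (exp y - 1) ≤ 1.01 * exp (-y) := by
  have h : 148 < exp y := exp_five_gt.trans_le (exp_le_exp.2 hy)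
  rw [exp_neg, ← div_eq_mul_inv, div_le_div_iff₀ (by linarith) (by linarith)]
  linarith

theorem one_div_exp_sub_one_le_half {y : ℝ} (hy : 5 ≤ y) : 1 / (exp y - 1) ≤ 1 / 2 := by
  have h : 148 < exp y := exp_five_gt.trans_le (exp_le_exp.2 hy)
  exact one_div_le_one_div_of_le (by norm_num) (by linarith)

theorem thousand_mul_sq_le_two_pow {n : ℕ} (hn : 30 ≤ n) : 1000 * n ^ 2 ≤ 2 ^ n := by
  induction n, hn using Nat.le_induction with
  | base => norm_num
  | succ n hn ih => rw [pow_succ 2 n]; nlinarith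

def beta (T : ℝ) : ℝ := log 2 / T - 1 / (2 * T ^ 2)

section Beta

variable {T : ℝ}

theorem le_mul_beta (hT : 30 ≤ T) : 0.676 ≤ T * beta T := by
  have hL := log_two_gt_d9
  have h : T * beta T = log 2 - 1 / (2 * T) := by unfold beta; field_simp
  rw [h]
  have : 1 / (2 * T) ≤ 1 / 60 := one_div_le_one_div_of_le (by norm_num) (by linarith)
  norm_num at hL
  linarith

theorem mul_beta_le (hT : 0 < T) : T * beta T ≤ 0.7 := by
  have hL := log_two_lt_d9
  have h : T * beta T = log 2 - 1 / (2 * T) := by unfold beta; field_simp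
  rw [h]
  have : 0 < 1 / (2 * T) := by positivity
  norm_num at hL
  linarith

theorem beta_pos (hT : 30 ≤ T) : 0 < beta T := by
  have := le_mul_beta hT
  nlinarith

theorem exp_beta_le (hT : 30 ≤ T) : exp (beta T) ≤ 1 + log 2 / T - 0.13 / T ^ 2 := by
  have hT0 : 0 < T := by linarith
  have hlo := le_mul_beta hT
  have hhi := mul_beta_le hT0
  have hβ0 := (beta_pos hT).le
  have hβ1 : beta T ≤ 1 := by nlinarith
  have hexp := exp_bound' hβ0 hβ1 (n := 2) (by norm_num)
  norm_num [sum_range_succ] at hexp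
  have hsq : beta T ^ 2 ≤ 0.49 * (1 / T ^ 2) := by
    rw [← div_eq_mul_one_div, le_div_iff₀ (by positivity)]
    nlinarith
  have : log 2 / T - 0.13 / T ^ 2 = beta T + 0.37 * (1 / T ^ 2) := by
    unfold beta; field_simp; ring
  have hu : 0 ≤ 1 / T ^ 2 := by positivity
  linarith

theorem log_two_mul_add_le (hT : 30 ≤ T) :
    log 2 * (T ^ 2 + T) + 0.19 * T ≤ (T ^ 3 + 2 * T ^ 2 + 2 * T + 2) * beta T := by
  have hL := log_two_gt_d9
  have hT0 : 0 < T := by linarith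
  have h : (T ^ 3 + 2 * T ^ 2 + 2 * T + 2) * beta T - (log 2 * (T ^ 2 + T) + 0.19 * T) =
      ((2 * log 2 - 1.38) * T ^ 3 + (4 * log 2 - 2) * T ^ 2 + (4 * log 2 - 2) * T - 2) /
        (2 * T ^ 2) := by
    unfold beta; field_simp; ring
  rw [← sub_nonneg, h]
  norm_num at hL
  have h3 : 0 ≤ (2 * log 2 - 1.38) * T ^ 3 := mul_nonneg (by linarith) (by positivity)
  have h2 : 0 ≤ (4 * log 2 - 2) * T ^ 2 := mul_nonneg (by linarith) (by positivity)
  have h1 : 2 ≤ (4 * log 2 - 2) * T := by nlinarith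
  exact div_nonneg (by linarith) (by positivity)

end Beta

theorem le_r3 (t : ℕ) : 1 + log 2 / t - 0.107 / t ^ 2 ≤ r3 t := by
  have hL := log_two_gt_d9
  have hL' := log_two_lt_d9
  have hu : 0 ≤ 1 / (t : ℝ) ^ 2 := by positivity
  have h : (log 2 - log 2 ^ 2) / (2 * t ^ 2) = (log 2 - log 2 ^ 2) / 2 * (1 / t ^ 2) := by ring
  norm_num at hL hL'
  have hLL : (log 2 - log 2 ^ 2) / 2 ≤ 0.107 := by nlinarith
  unfold r3
  rw [h, div_eq_mul_one_div 0.107]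
  nlinarith

theorem r3_le (t : ℕ) : r3 t ≤ 1 + log 2 / t := by
  have hL := log_two_gt_d9
  have hL' := log_two_lt_d9
  have : 0 ≤ (log 2 - log 2 ^ 2) / (2 * t ^ 2) := by
    norm_num at hL hL'
    exact div_nonneg (by nlinarith) (by positivity)
  unfold r3
  linarith

theorem one_div_r3_add_lt_exp_neg_beta {t : ℕ} (ht : 30 ≤ t) {ρ : ℝ} (hρ0 : 0 ≤ ρ)
    (hρ : 1000 * t ^ 2 * ρ ≤ 1) : 1 / r3 t + ρ < exp (-beta t) := by
  have hT : (30 : ℝ) ≤ t := by exact_mod_cast ht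
  have hT0 : (0 : ℝ) < t := by linarith
  have hE := exp_beta_le hT
  have hr := le_r3 t
  have hr' := r3_le t
  have hL := log_two_lt_d9
  have hLT : log 2 / t ≤ 0.7 / 30 :=
    div_le_div₀ (by norm_num) (by norm_num at hL; linarith) (by norm_num) hT
  set E := exp (beta t)
  set u : ℝ := 1 / t ^ 2 with hu
  have hu0 : 0 < u := by positivity
  have hρu : ρ ≤ 0.001 * u := by
    rw [hu, ← div_eq_mul_one_div, le_div_iff₀ (by positivity)]
    linarith
  rw [div_eq_mul_one_div 0.13, ← hu] at hE
  rw [div_eq_mul_one_div 0.107, ← hu] at hr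
  have hE0 : 0 < E := exp_pos _
  have hr0 : 0 < r3 t := by nlinarith
  have hρEr : ρ * E * r3 t ≤ 1.21 * ρ := by
    have : E * r3 t ≤ 1.21 := by nlinarith
    nlinarith
  rw [exp_neg, inv_eq_one_div, lt_div_iff₀ hE0, add_mul, div_mul_eq_mul_div, one_mul,
    ← lt_sub_iff_add_lt, div_lt_iff₀ hr0]
  nlinarith

theorem five_le_brk_mul_beta {t j : ℕ} (ht : 30 ≤ t) (hj : 3 ≤ j) : 5 ≤ brk t j * beta t := by
  have hT : (30 : ℝ) ≤ t := by exact_mod_cast ht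
  have hbrk : (t : ℝ) ^ 2 ≤ brk t j := by
    have h3 : t ^ 2 ≤ brk t 3 := by rw [brk_three]; omega
    exact_mod_cast h3.trans (brk_mono t hj)
  have hβ := le_mul_beta hT
  nlinarith [mul_le_mul_of_nonneg_right hbrk (beta_pos hT).le]

theorem prod_one_div_exp_sub_one_le {t : ℕ} (ht : 30 ≤ t) :
    ∏ j ∈ Icc 1 4, 1 / (exp (brk t j * beta t) - 1) ≤
      1.7 * t * exp (-((t ^ 3 + 2 * t ^ 2 + 2 * t + 2) * beta t)) := by
  have hT : (30 : ℝ) ≤ t := by exact_mod_cast ht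
  have hβ := le_mul_beta hT
  have hβ0 := beta_pos hT
  have hy : ∀ j, 0 ≤ (brk t j : ℝ) * beta t := fun j => by positivity
  have h1 : 1 / (exp (brk t 1 * beta t) - 1) ≤ t / 0.676 := by
    rw [show brk t 1 = 1 by simp [brk], Nat.cast_one, one_mul]
    refine (one_div_exp_sub_one_le_one_div hβ0).trans ?_
    rw [div_le_div_iff₀ hβ0 (by norm_num)]
    linarith
  have h2 : 1 / (exp (brk t 2 * beta t) - 1) ≤ 1 / 0.9 := by
    have hy2 : 0.676 ≤ (brk t 2 : ℝ) * beta t := by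
      rw [brk_two]; push_cast; nlinarith
    have := quadratic_le_exp_of_nonneg (hy 2)
    exact one_div_le_one_div_of_le (by norm_num) (by nlinarith)
  have h3 := one_div_exp_sub_one_le_mul_exp_neg (five_le_brk_mul_beta ht le_rfl)
  have h4 := one_div_exp_sub_one_le_mul_exp_neg (five_le_brk_mul_beta ht (by norm_num : 3 ≤ 4))
  have hS : (t ^ 3 + 2 * t ^ 2 + 2 * t + 2) * beta t =
      brk t 3 * beta t + brk t 4 * beta t := by
    rw [brk_three, brk_four]; push_cast; ring
  rw [show Icc 1 4 = {1, 2, 3, 4} by decide, prod_insert (by decide), prod_insert (by decide),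
    prod_insert (by decide), prod_singleton, hS, neg_add, exp_add]
  have hnn : ∀ j, 0 ≤ 1 / (exp (brk t j * beta t) - 1) := fun j =>
    one_div_exp_sub_one_nonneg (hy j)
  calc _ ≤ t / 0.676 * (1 / 0.9 * (1.01 * exp (-(brk t 3 * beta t)) *
        (1.01 * exp (-(brk t 4 * beta t))))) :=
        mul_le_mul h1 (mul_le_mul h2 (mul_le_mul h3 h4 (hnn 4) (by positivity))
          (mul_nonneg (hnn 3) (hnn 4)) (by norm_num)) (mul_nonneg (hnn 2)
          (mul_nonneg (hnn 3) (hnn 4))) (by positivity)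
    _ = 1.0201 / (0.676 * 0.9) * (t * (exp (-(brk t 3 * beta t)) *
        exp (-(brk t 4 * beta t)))) := by ring
    _ ≤ _ := by
        rw [mul_assoc]
        exact mul_le_mul_of_nonneg_right (by norm_num) (by positivity)

theorem two_mul_prod_le {t : ℕ} (ht : 30 ≤ t) :
    2 * ∏ j ∈ Icc 1 4, 1 / (exp (brk t j * beta t) - 1) ≤ 1 / 2 ^ (t ^ 2) * (1 / 2 ^ t) := by
  have hT : (30 : ℝ) ≤ t := by exact_mod_cast ht
  have hpow : (1 : ℝ) / 2 ^ (t ^ 2) * (1 / 2 ^ t) = exp (-(log 2 * (t ^ 2 + t))) := by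
    rw [show log 2 * ((t : ℝ) ^ 2 + t) = ((t ^ 2 + t : ℕ) : ℝ) * log 2 by push_cast; ring,
      exp_neg, exp_nat_mul, exp_log two_pos, pow_add]
    field_simp
  have hsmall : 3.4 * t * exp (-(0.19 * t)) ≤ 1 := by
    rw [exp_neg, ← div_eq_mul_inv, div_le_one (exp_pos _)]
    exact mul_le_exp_mul hT
  rw [hpow]
  calc 2 * ∏ j ∈ Icc 1 4, 1 / (exp (brk t j * beta t) - 1)
      ≤ 2 * (1.7 * t * exp (-((t ^ 3 + 2 * t ^ 2 + 2 * t + 2) * beta t))) :=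
        mul_le_mul_of_nonneg_left (prod_one_div_exp_sub_one_le ht) zero_le_two
    _ ≤ 2 * (1.7 * t * exp (-(log 2 * (t ^ 2 + t) + 0.19 * t))) := by
        gcongr; exact log_two_mul_add_le hT
    _ = 3.4 * t * exp (-(0.19 * t)) * exp (-(log 2 * (t ^ 2 + t))) := by
        rw [neg_add, exp_add]; ring
    _ ≤ exp (-(log 2 * (t ^ 2 + t))) := mul_le_of_le_one_left (exp_pos _).le hsmall

theorem norm_neg_one_pow_mul_prod_ff_le {t : ℕ} (ht : 30 ≤ t) {w : ℂ}
    (hw : ‖w‖ ≤ exp (-beta t)) (i : ℕ) :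
    ‖(-1 : ℂ) ^ (i + 4) * ∏ j ∈ Icc 1 (i + 4), ff t w j‖ ≤
      (∏ j ∈ Icc 1 4, 1 / (exp (brk t j * beta t) - 1)) * (1 / 2) ^ i := by
  have hβ : 0 < beta t := beta_pos (by exact_mod_cast ht)
  rw [norm_mul, norm_pow, norm_neg, norm_one, one_pow, one_mul]
  refine (norm_prod_Icc_add_le (ff t w) (c := 1 / 2) (by norm_num) (fun j hj => ?_) i).trans ?_
  · exact (norm_ff_le_s3 t (by omega) hβ hw).trans
      (one_div_exp_sub_one_le_half (five_le_brk_mul_beta ht (by omega)))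
  · rw [norm_prod]
    gcongr with j hj
    exact norm_ff_le_s3 t (mem_Icc.1 hj).1 hβ hw

theorem stmt_3_general (t : ℕ) (ht : 30 ≤ t) (q : ℂ)
    (hq2 : ‖q‖ ≤ 1 / r3 t) :
    ‖deriv (Dfun t) q - deriv (D4 t) q‖ ≤ 1 / 2 ^ (t ^ 2) := by
  set U := ball (0 : ℂ) (exp (-beta t))
  have hU : U ⊆ ball 0 1 :=
    ball_subset_ball (exp_le_one_iff.2 (neg_nonpos.2 (beta_pos (by exact_mod_cast ht)).le))
  have hρ : 1000 * (t : ℝ) ^ 2 * (1 / 2 ^ t) ≤ 1 := by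
    rw [← div_eq_mul_one_div, div_le_one (by positivity)]
    exact_mod_cast thousand_mul_sq_le_two_pow ht
  have hball : closedBall q (1 / 2 ^ t) ⊆ U := fun z hz => by
    have := one_div_r3_add_lt_exp_neg_beta ht (by positivity) hρ
    rw [mem_closedBall, dist_eq_norm] at hz
    rw [mem_ball, dist_zero_right]
    linarith [norm_le_norm_add_norm_sub' z q]
  have hdiff : ∀ k, DifferentiableOn ℂ (fun w => (-1 : ℂ) ^ k * ∏ j ∈ Icc 1 k, ff t w j) U :=
    fun k => .const_mul (.fun_finsetProd fun j hj =>
      (differentiableOn_ff t (mem_Icc.1 hj).1).mono hU) _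
  set M := ∏ j ∈ Icc 1 4, 1 / (exp (brk t j * beta t) - 1)
  calc _ ≤ (∑' i, M * (1 / 2) ^ i) / (1 / 2 ^ t) :=
        norm_deriv_tsum_sub_deriv_sum_le isOpen_ball hdiff (summable_geometric_two.mul_left _)
          (fun i w hw => norm_neg_one_pow_mul_prod_ff_le ht (mem_ball_zero_iff.1 hw).le i)
          (by positivity) hball
    _ ≤ 1 / 2 ^ (t ^ 2) := by
        rw [tsum_mul_left, tsum_geometric_two, mul_comm, div_le_iff₀ (by positivity)]
        exact two_mul_prod_le ht

theorem stmt_3 (t : ℕ) (ht : 30 ≤ t) (q : ℂ)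
    (hq1 : 1 / 2 ≤ ‖q‖) (hq2 : ‖q‖ ≤ 1 / r3 t) :
    ‖deriv (Dfun t) q - deriv (D4 t) q‖ ≤ 1 / 2 ^ (t ^ 2) :=
  stmt_3_general t ht q hq2
end
end

section
/- Let t ≥ 2 and n ≥ 0 be integers. Then f_t(1 + n(t−1)) = c_n; that is, the number of nondecreasing (1+n(t−1))-tuples of nonnegative integers 0 ≤ x_1 ≤ ⋯ ≤ x_{1+n(t−1)} with Σ_i 1/t^{x_i} = 1 equals the number of finite sequences (b_1, …, b_l) of positive integers (l ≥ 0) with b_1 = 1, b_i ≤ t·b_{i−1} for 2 ≤ i ≤ l, and b_1 + ⋯ + b_l = n. -/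
noncomputable section

/-!
A nondecreasing tuple with `∑ t ^ (-xᵢ) = 1` is the sorted list of leaf depths of a full `t`-ary
tree, and the canonical such tree is determined by the numbers `b_d` of inner vertices at each
depth. The leaf counts `a_d` and inner counts `b_d` satisfy `a₀ + b₀ = 1` and
`a_{d+1} + b_{d+1} = t b_d`, so each sequence determines the other: `a` is read off `b`, and
`b_D = t ^ D - ∑_{d ≤ D} a_d t ^ (D - d)` is nonnegative because the partial Kraft sums are at
most `1`. Counting vertices, a tree with `n` inner vertices has `1 + n (t - 1)` leaves.
-/

open Finset

section MonotoneTuple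

variable {α : Type*} [LinearOrder α] {r : ℕ}

theorem injOn_coe_ofFn_monotone :
    Set.InjOn (fun x : Fin r → α => (List.ofFn x : Multiset α)) {x | Monotone x} := by
  intro x hx y hy hxy
  apply List.ofFn_injective
  exact List.Perm.eq_of_sortedLE (List.sortedLE_ofFn_iff.2 hx) (List.sortedLE_ofFn_iff.2 hy)
    (Multiset.coe_eq_coe.1 hxy)

theorem exists_monotone_coe_ofFn_eq {m : Multiset α} (hm : Multiset.card m = r) :
    ∃ x : Fin r → α, Monotone x ∧ (List.ofFn x : Multiset α) = m := by
  subst hm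
  have hofFn : List.ofFn (fun i : Fin m.sort.length => m.sort[i]) = m.sort := List.ofFn_getElem
  rw [← Multiset.length_sort (· ≤ ·)]
  refine ⟨_, ?_, by rw [hofFn, Multiset.sort_eq]⟩
  rw [← List.sortedLE_ofFn_iff, hofFn]
  exact (Multiset.pairwise_sort m _).sortedLE

theorem ncard_monotone_sum_eq {M : Type*} [AddCommMonoid M] (f : α → M) (c : M) :
    {x : Fin r → α | Monotone x ∧ ∑ i, f (x i) = c}.ncard
      = {m : Multiset α | Multiset.card m = r ∧ (m.map f).sum = c}.ncard := by
  have himage : {m : Multiset α | Multiset.card m = r ∧ (m.map f).sum = c}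
      = (fun x : Fin r → α => (List.ofFn x : Multiset α)) ''
          {x | Monotone x ∧ ∑ i, f (x i) = c} := by
    ext m
    constructor
    · rintro ⟨hcard, hsum⟩
      obtain ⟨x, hx, rfl⟩ := exists_monotone_coe_ofFn_eq hcard
      refine ⟨x, ⟨hx, ?_⟩, rfl⟩
      simpa [List.sum_ofFn] using hsum
    · rintro ⟨x, ⟨-, hsum⟩, rfl⟩
      simpa [List.sum_ofFn] using hsum
  rw [himage, (injOn_coe_ofFn_monotone.mono fun x hx => hx.1).ncard_image]

end MonotoneTuple

theorem List.sum_eq_sum_range_getD (l : List ℕ) :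
    l.sum = ∑ d ∈ Finset.range l.length, l.getD d 0 := by
  rw [← Fin.sum_univ_eq_sum_range, ← List.sum_ofFn]
  congr
  conv_lhs => rw [← List.ofFn_getElem (xs := l)]
  exact List.ofFn_inj.2 (funext fun i => (List.getD_eq_getElem _ _ i.2).symm)

theorem Multiset.sum_map_eq_sum_range_count {M : Type*} [AddCommMonoid M] {m : Multiset ℕ}
    {N : ℕ} (hN : ∀ x ∈ m, x < N) (f : ℕ → M) :
    (m.map f).sum = ∑ d ∈ Finset.range N, m.count d • f d := by
  rw [Finset.sum_multiset_map_count]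
  refine sum_subset (fun x hx => mem_range.2 (hN x (Multiset.mem_toFinset.1 hx))) fun x _ hx => ?_
  rw [Multiset.count_eq_zero.2 (fun h => hx (Multiset.mem_toFinset.2 h)), zero_smul]

-- `a d` leaves and `b d` inner vertices at depth `d` of a full `t`-ary tree.
def IsLevelCounts (t : ℕ) (a b : ℕ → ℕ) : Prop :=
  a 0 + b 0 = 1 ∧ ∀ d, a (d + 1) + b (d + 1) = t * b d

namespace IsLevelCounts

variable {t : ℕ} {a b : ℕ → ℕ}

theorem sum_add_sum (h : IsLevelCounts t a b) (D : ℕ) :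
    ∑ d ∈ range (D + 1), (a d + b d) = 1 + t * ∑ d ∈ range D, b d := by
  induction D with
  | zero => simpa using h.1
  | succ D ih => rw [sum_range_succ, ih, h.2, sum_range_succ (b ·)]; ring

theorem sum_div_pow_add_div_pow (ht : t ≠ 0) (h : IsLevelCounts t a b) (D : ℕ) :
    ∑ d ∈ range (D + 1), (a d : ℚ) / t ^ d + b D / t ^ D = 1 := by
  induction D with
  | zero => simpa using congrArg (Nat.cast (R := ℚ)) h.1
  | succ D ih =>
    have hD : (a (D + 1) : ℚ) + b (D + 1) = t * b D := by exact_mod_cast h.2 D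
    rw [sum_range_succ, add_assoc, ← add_div, hD, pow_succ, mul_comm _ (t : ℚ),
      mul_div_mul_left _ _ (Nat.cast_ne_zero.2 ht)]
    exact ih

theorem inner_eq_zero_of_le (h : IsLevelCounts t a b) {D d : ℕ} (hD : b D = 0) (hd : D ≤ d) :
    b d = 0 := by
  induction d, hd using Nat.le_induction with
  | base => exact hD
  | succ d _ ih => have := h.2 d; simp_all

theorem leaves_unique {a' : ℕ → ℕ} (h : IsLevelCounts t a b) (h' : IsLevelCounts t a' b) :
    a = a' := by
  funext d
  cases d with
  | zero => have := h.1; have := h'.1; omega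
  | succ d => have := h.2 d; have := h'.2 d; omega

theorem inner_unique {b' : ℕ → ℕ} (h : IsLevelCounts t a b) (h' : IsLevelCounts t a b') :
    b = b' := by
  funext d
  induction d with
  | zero => have := h.1; have := h'.1; omega
  | succ d ih => have := h.2 d; have := h'.2 d; rw [ih] at *; omega

end IsLevelCounts

theorem isBSeq_iff_getD {t : ℕ} {l : List ℕ} :
    IsBSeq t l ↔ (∀ d < l.length, 0 < l.getD d 0) ∧ l.getD 0 0 ≤ 1 ∧
      ∀ d, l.getD (d + 1) 0 ≤ t * l.getD d 0 := by
  constructor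
  · rintro ⟨hpos, hhead, hstep⟩
    refine ⟨fun d hd => ?_, ?_, fun d => ?_⟩
    · rw [List.getD_eq_getElem _ _ hd]
      exact hpos _ (List.getElem_mem hd)
    · cases l with
      | nil => simp
      | cons x l => simpa using (hhead (List.cons_ne_nil x l)).le
    · by_cases hd : d + 1 < l.length
      · rw [List.getD_eq_getElem _ _ hd, List.getD_eq_getElem _ _ (Nat.lt_of_succ_lt hd)]
        exact hstep d hd
      · rw [List.getD_eq_default _ _ (Nat.le_of_not_lt hd)]
        exact Nat.zero_le _
  · rintro ⟨hpos, hhead, hstep⟩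
    refine ⟨fun x hx => ?_, fun hne => ?_, fun d hd => ?_⟩
    · obtain ⟨d, hd, rfl⟩ := List.getElem_of_mem hx
      simpa only [List.getD_eq_getElem _ _ hd] using hpos d hd
    · cases l with
      | nil => exact absurd rfl hne
      | cons x l => have := hpos 0 (by simp); simp at this hhead ⊢; omega
    · simpa only [List.get_eq_getElem, List.getD_eq_getElem _ _ hd,
        List.getD_eq_getElem _ _ (Nat.lt_of_succ_lt hd)] using hstep d

theorem IsBSeq.eq_of_getD_eq {t : ℕ} {l l' : List ℕ} (hl : IsBSeq t l) (hl' : IsBSeq t l')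
    (h : ∀ d, l.getD d 0 = l'.getD d 0) : l = l' := by
  have hpos_iff : ∀ {k : List ℕ}, IsBSeq t k → ∀ d, 0 < k.getD d 0 ↔ d < k.length :=
    fun hk d => ⟨fun hd => by_contra fun hd' => by
      rw [List.getD_eq_default _ _ (not_lt.1 hd')] at hd; exact hd.false,
      (isBSeq_iff_getD.1 hk).1 d⟩
  have hlen : l.length = l'.length :=
    eq_of_forall_lt_iff fun d => by rw [← hpos_iff hl, ← hpos_iff hl', h]
  refine List.ext_getElem hlen fun d hd hd' => ?_
  simpa only [List.getD_eq_getElem _ _ hd, List.getD_eq_getElem _ _ hd'] using h d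

theorem IsLevelCounts.exists_isBSeq {t D : ℕ} {a b : ℕ → ℕ} (h : IsLevelCounts t a b)
    (hD : b D = 0) : ∃ l, IsBSeq t l ∧ ∀ d, l.getD d 0 = b d := by
  have hex : ∃ D, b D = 0 := ⟨D, hD⟩
  set L := Nat.find hex
  have hgetD : ∀ d, ((List.range L).map b).getD d 0 = b d := by
    intro d
    by_cases hd : d < L
    · simp [hd]
    · rw [List.getD_eq_default _ _ (by simpa using hd)]
      exact (h.inner_eq_zero_of_le (Nat.find_spec hex) (not_lt.1 hd)).symm
  refine ⟨_, isBSeq_iff_getD.2 ⟨fun d hd => ?_, ?_, fun d => ?_⟩, hgetD⟩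
  · rw [hgetD]
    exact Nat.pos_of_ne_zero (Nat.find_min hex (by rwa [List.length_map, List.length_range] at hd))
  · rw [hgetD]; have := h.1; omega
  · rw [hgetD, hgetD]; have := h.2 d; omega

def leafCount (t : ℕ) (l : List ℕ) : ℕ → ℕ
  | 0 => 1 - l.getD 0 0
  | d + 1 => t * l.getD d 0 - l.getD (d + 1) 0

theorem IsBSeq.isLevelCounts {t : ℕ} {l : List ℕ} (hl : IsBSeq t l) :
    IsLevelCounts t (leafCount t l) (l.getD · 0) := by
  obtain ⟨-, hhead, hstep⟩ := isBSeq_iff_getD.1 hl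
  refine ⟨?_, fun d => ?_⟩
  · simp only [leafCount]; omega
  · have := hstep d; simp only [leafCount]; omega

def leafMultiset (t : ℕ) (l : List ℕ) : Multiset ℕ :=
  ∑ d ∈ range (l.length + 1), Multiset.replicate (leafCount t l d) d

theorem count_leafMultiset (t : ℕ) (l : List ℕ) (d : ℕ) :
    (leafMultiset t l).count d = leafCount t l d := by
  simp only [leafMultiset, Multiset.count_sum', Multiset.count_replicate, sum_ite_eq',
    mem_range]
  split_ifs with hd
  · rfl
  · obtain ⟨e, rfl⟩ : ∃ e, d = e + 1 := ⟨d - 1, by omega⟩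
    rw [leafCount, List.getD_eq_default _ _ (by omega), List.getD_eq_default _ _ (by omega),
      mul_zero, Nat.sub_zero]

theorem lt_of_mem_leafMultiset {t : ℕ} {l : List ℕ} {d : ℕ} (hd : d ∈ leafMultiset t l) :
    d < l.length + 1 := by
  obtain ⟨e, he, hd⟩ := Multiset.mem_sum.1 hd
  rw [Multiset.eq_of_mem_replicate hd]
  exact mem_range.1 he

theorem card_leafMultiset {t : ℕ} (ht : t ≠ 0) {l : List ℕ} (hl : IsBSeq t l) :
    Multiset.card (leafMultiset t l) = 1 + l.sum * (t - 1) := by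
  have hsum := hl.isLevelCounts.sum_add_sum l.length
  rw [sum_add_distrib, sum_range_succ (l.getD · 0), List.getD_eq_default _ _ le_rfl,
    ← List.sum_eq_sum_range_getD] at hsum
  rw [leafMultiset, Multiset.card_sum]
  simp only [Multiset.card_replicate]
  obtain ⟨s, rfl⟩ := Nat.exists_eq_succ_of_ne_zero ht
  rw [Nat.succ_sub_one]
  linarith

def kraftSum (t : ℕ) (m : Multiset ℕ) : ℚ := (m.map fun d => (1 : ℚ) / t ^ d).sum

theorem kraftSum_eq_sum_range {t N : ℕ} {m : Multiset ℕ} (hN : ∀ x ∈ m, x < N) :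
    kraftSum t m = ∑ d ∈ range N, (m.count d : ℚ) / t ^ d := by
  simp only [kraftSum, Multiset.sum_map_eq_sum_range_count hN, nsmul_eq_mul, mul_one_div]

theorem kraftSum_leafMultiset {t : ℕ} (ht : t ≠ 0) {l : List ℕ} (hl : IsBSeq t l) :
    kraftSum t (leafMultiset t l) = 1 := by
  have hK := hl.isLevelCounts.sum_div_pow_add_div_pow ht l.length
  rw [List.getD_eq_default _ _ le_rfl, Nat.cast_zero, zero_div, add_zero] at hK
  simp only [kraftSum_eq_sum_range (fun _ => lt_of_mem_leafMultiset), count_leafMultiset, hK]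

theorem injOn_leafMultiset {t : ℕ} : Set.InjOn (leafMultiset t) {l | IsBSeq t l} := by
  intro l hl l' hl' h
  have hleaf : leafCount t l = leafCount t l' :=
    funext fun d => by rw [← count_leafMultiset, h, count_leafMultiset]
  refine IsBSeq.eq_of_getD_eq hl hl' (congrFun ?_)
  exact hl.isLevelCounts.inner_unique (hleaf ▸ hl'.isLevelCounts)

-- The depth-`D` vertices of the complete `t`-ary tree that lie below no leaf of depth `≤ D`.
def innerCount (t : ℕ) (m : Multiset ℕ) (D : ℕ) : ℕ :=
  t ^ D - ∑ d ∈ range (D + 1), m.count d * t ^ (D - d)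

section InnerCount

variable {t : ℕ} {m : Multiset ℕ}

theorem sum_range_count_div_pow_le_one (hm : kraftSum t m = 1) (D : ℕ) :
    ∑ d ∈ range (D + 1), (m.count d : ℚ) / t ^ d ≤ 1 := by
  have hN : ∀ x ∈ m, x < D + 1 + m.sup := fun x hx => by have := Multiset.le_sup hx; omega
  calc ∑ d ∈ range (D + 1), (m.count d : ℚ) / t ^ d
      ≤ ∑ d ∈ range (D + 1 + m.sup), (m.count d : ℚ) / t ^ d :=
        sum_le_sum_of_subset_of_nonneg (range_subset_range.2 (by omega))
          fun _ _ _ => by positivity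
    _ = 1 := by rw [← kraftSum_eq_sum_range hN, hm]

theorem cast_innerCount (ht : t ≠ 0) (hm : kraftSum t m = 1) (D : ℕ) :
    (innerCount t m D : ℚ) = t ^ D * (1 - ∑ d ∈ range (D + 1), (m.count d : ℚ) / t ^ d) := by
  have hcast : ((∑ d ∈ range (D + 1), m.count d * t ^ (D - d) : ℕ) : ℚ)
      = t ^ D * ∑ d ∈ range (D + 1), (m.count d : ℚ) / t ^ d := by
    push_cast
    rw [mul_sum]
    refine sum_congr rfl fun d hd => ?_
    rw [pow_sub₀ _ (Nat.cast_ne_zero.2 ht) (Nat.lt_succ_iff.1 (mem_range.1 hd))]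
    ring
  have hle : ∑ d ∈ range (D + 1), m.count d * t ^ (D - d) ≤ t ^ D := by
    have := mul_le_mul_of_nonneg_left (sum_range_count_div_pow_le_one hm D)
      (pow_nonneg (Nat.cast_nonneg t : (0 : ℚ) ≤ t) D)
    rw [mul_one, ← hcast] at this
    exact_mod_cast this
  rw [innerCount, Nat.cast_sub hle, hcast]
  push_cast
  ring

theorem isLevelCounts_count_innerCount (ht : t ≠ 0) (hm : kraftSum t m = 1) :
    IsLevelCounts t m.count (innerCount t m) := by
  constructor
  · rw [← Nat.cast_inj (R := ℚ)]
    push_cast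
    rw [cast_innerCount ht hm, sum_range_one]
    field_simp
    ring
  · intro D
    rw [← Nat.cast_inj (R := ℚ)]
    push_cast
    rw [cast_innerCount ht hm, cast_innerCount ht hm, sum_range_succ _ (D + 1)]
    field_simp
    ring

theorem innerCount_eq_zero (ht : t ≠ 0) (hm : kraftSum t m = 1) {D : ℕ} (hD : ∀ x ∈ m, x ≤ D) :
    innerCount t m D = 0 := by
  rw [← Nat.cast_eq_zero (R := ℚ), cast_innerCount ht hm,
    ← kraftSum_eq_sum_range fun x hx => Nat.lt_succ_of_le (hD x hx), hm, sub_self, mul_zero]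

theorem exists_isBSeq_leafMultiset_eq (ht : t ≠ 0) (hm : kraftSum t m = 1) :
    ∃ l, IsBSeq t l ∧ leafMultiset t l = m := by
  have hcounts := isLevelCounts_count_innerCount ht hm
  obtain ⟨l, hl, hgetD⟩ :=
    hcounts.exists_isBSeq (innerCount_eq_zero ht hm fun _ => Multiset.le_sup)
  have hleaves := hl.isLevelCounts
  rw [funext hgetD] at hleaves
  refine ⟨l, hl, Multiset.ext.2 fun d => ?_⟩
  rw [count_leafMultiset, hleaves.leaves_unique hcounts]

end InnerCount

theorem image_leafMultiset {t : ℕ} (ht : 2 ≤ t) (n : ℕ) :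
    leafMultiset t '' {l | IsBSeq t l ∧ l.sum = n}
      = {m | Multiset.card m = 1 + n * (t - 1) ∧ kraftSum t m = 1} := by
  have ht0 : t ≠ 0 := by omega
  ext m
  constructor
  · rintro ⟨l, ⟨hl, rfl⟩, rfl⟩
    exact ⟨card_leafMultiset ht0 hl, kraftSum_leafMultiset ht0 hl⟩
  · rintro ⟨hcard, hm⟩
    obtain ⟨l, hl, rfl⟩ := exists_isBSeq_leafMultiset_eq ht0 hm
    rw [card_leafMultiset ht0 hl] at hcard
    exact ⟨l, ⟨hl, Nat.eq_of_mul_eq_mul_right (by omega) (Nat.add_left_cancel hcard)⟩, rfl⟩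

theorem stmt_14 (t n : ℕ) (ht : 2 ≤ t) :
    {x : Fin (1 + n * (t - 1)) → ℕ | Monotone x ∧
      ∑ i, (1 : ℚ) / t ^ x i = 1}.ncard = cseq t n := by
  calc _ = {m : Multiset ℕ | Multiset.card m = 1 + n * (t - 1) ∧ kraftSum t m = 1}.ncard :=
        ncard_monotone_sum_eq _ _
    _ = (leafMultiset t '' {l | IsBSeq t l ∧ l.sum = n}).ncard := by rw [image_leafMultiset ht]
    _ = cseq t n := (injOn_leafMultiset.mono fun _ hl => hl.1).ncard_image
end
end

section
/- Let t ≥ 2 and n ≥ 1 be integers. Then c_n is at least the number of compositions of n − 1 into parts from {1, 2, …, t}, i.e., the number of finite sequences (d_1, …, d_m) of integers with 1 ≤ d_i ≤ t and d_1 + ⋯ + d_m = n − 1. (For t = 2 this gives the Fibonacci lower bound f_2(r) ≥ F_r.) -/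
noncomputable section

/-! Prepending `1` to a composition of `n - 1` into parts `≤ t` gives a bounded degree sequence
of sum `n`: every later entry is at most `t ≤ t · b` for the positive entry `b` before it. -/

theorem finite_setOf_pos_sum_eq (n : ℕ) : {l : List ℕ | (∀ x ∈ l, 0 < x) ∧ l.sum = n}.Finite := by
  let toComposition : {l : List ℕ | (∀ x ∈ l, 0 < x) ∧ l.sum = n} → Composition n :=
    fun l => ⟨l.1, fun hx => l.2.1 _ hx, l.2.2⟩
  have : Finite {l : List ℕ | (∀ x ∈ l, 0 < x) ∧ l.sum = n} :=
    Finite.of_injective toComposition fun a b hab => Subtype.ext (congrArg Composition.blocks hab)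
  exact Set.toFinite _

theorem finite_setOf_isBSeq_sum_eq (t n : ℕ) : {l : List ℕ | IsBSeq t l ∧ l.sum = n}.Finite :=
  (finite_setOf_pos_sum_eq n).subset fun _ hl => ⟨hl.1.1, hl.2⟩

theorem isBSeq_one_cons {t : ℕ} {d : List ℕ} (hd : ∀ x ∈ d, 1 ≤ x ∧ x ≤ t) :
    IsBSeq t (1 :: d) := by
  have hone : ∀ x ∈ 1 :: d, 1 ≤ x := by
    simpa using fun x hx => (hd x hx).1
  refine ⟨hone, fun _ => rfl, fun i h => ?_⟩
  calc (1 :: d).get ⟨i + 1, h⟩ = d.get ⟨i, by simpa using h⟩ := rfl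
    _ ≤ t := (hd _ (List.get_mem _ _)).2
    _ = t * 1 := (mul_one t).symm
    _ ≤ t * (1 :: d).get ⟨i, Nat.lt_of_succ_lt h⟩ :=
        Nat.mul_le_mul_left t (hone _ (List.get_mem _ _))

theorem stmt_19_general (t n : ℕ) (hn : 1 ≤ n) :
    {d : List ℕ | (∀ x ∈ d, 1 ≤ x ∧ x ≤ t) ∧ d.sum = n - 1}.ncard ≤ cseq t n := by
  set S := {d : List ℕ | (∀ x ∈ d, 1 ≤ x ∧ x ≤ t) ∧ d.sum = n - 1}
  have hmaps : List.cons 1 '' S ⊆ {l : List ℕ | IsBSeq t l ∧ l.sum = n} := by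
    rintro _ ⟨d, ⟨hd, hsum⟩, rfl⟩
    exact ⟨isBSeq_one_cons hd, by simp [hsum, Nat.add_sub_cancel' hn]⟩
  calc S.ncard = (List.cons 1 '' S).ncard := (Set.ncard_image_of_injective S List.cons_injective).symm
    _ ≤ cseq t n := Set.ncard_le_ncard hmaps (finite_setOf_isBSeq_sum_eq t n)

theorem stmt_19 (t n : ℕ) (ht : 2 ≤ t) (hn : 1 ≤ n) :
    {d : List ℕ | (∀ x ∈ d, 1 ≤ x ∧ x ≤ t) ∧ d.sum = n - 1}.ncard ≤ cseq t n :=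
  stmt_19_general t n hn
end
end
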